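/- arXiv:2104.05301 — 2 statements merged into one kernel-verified Lean document; each statement's English description precedes it below -/
import Mathlib

section
/- Let f, g : ℝ^n × ℝ^n → ℂ be smooth and ℤ^{2n}-periodic. Then for every integer j ≥ 0, ∫_{[0,1]^{2n}} C_j(f,g)(x,y) d^n x d^n y = ∫_{[0,1]^{2n}} C_j(g,f)(x,y) d^n x d^n y, and likewise ∫_{[0,1]^{2n}} Č_j(f,g) = ∫_{[0,1]^{2n}} Č_j(g,f). (Consequently the functional Tr(f) = ∫_X f e^{ω/ℏ} is a trace map for both star products ⋆ and ⋆̌.) -/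
open MeasureTheory Complex
open scoped Real

noncomputable section

/-- The unit box `[0,1]^n` in `ℝ^n`. -/
def box (n : ℕ) : Set (Fin n → ℝ) := Set.univ.pi fun _ => Set.Icc (0:ℝ) 1

/-- `ℤ^{2n}`-periodicity of a function `f(x,y)` on `ℝ^n × ℝ^n`. -/
def IsPeriodic2 (n : ℕ) (f : (Fin n → ℝ) × (Fin n → ℝ) → ℂ) : Prop :=
  ∀ (x y : Fin n → ℝ) (a b : Fin n → ℤ),
    f (x + fun i => (a i : ℝ), y + fun i => (b i : ℝ)) = f (x, y)

/-- The `m`-th fibrewise Fourier coefficient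
`f̂_m(y) = ∫_{[0,1]^n} f(x,y) e^{-2π√-1 m·x} dx`. -/
def fhat (n : ℕ) (f : (Fin n → ℝ) × (Fin n → ℝ) → ℂ) (m : Fin n → ℤ) (y : Fin n → ℝ) : ℂ :=
  ∫ x in box n, f (x, y) * Complex.exp (-2 * π * Complex.I * ∑ i, (m i : ℂ) * (x i : ℂ))

/-- `N_m = ∏_{i : m_i ≠ 0} 1/(2π√-1 m_i)`. -/
def Nm (n : ℕ) (m : Fin n → ℤ) : ℂ :=
  ∏ i ∈ Finset.univ.filter (fun i => m i ≠ 0), (1 / (2 * π * Complex.I * (m i : ℂ)))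
/-- Partial derivative `∂/∂x^i` of a function `f(x,y)` on `ℝ^n × ℝ^n`. -/
def pderivX (n : ℕ) (i : Fin n) (f : (Fin n → ℝ) × (Fin n → ℝ) → ℂ) :
    (Fin n → ℝ) × (Fin n → ℝ) → ℂ :=
  fun p => fderiv ℝ f p (Pi.single i (1:ℝ), 0)

/-- Partial derivative `∂/∂y^i` of a function `f(x,y)` on `ℝ^n × ℝ^n`. -/
def pderivY (n : ℕ) (i : Fin n) (f : (Fin n → ℝ) × (Fin n → ℝ) → ℂ) :
    (Fin n → ℝ) × (Fin n → ℝ) → ℂ :=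
  fun p => fderiv ℝ f p (0, Pi.single i (1:ℝ))

/-- Iterated `x`-derivative `∂^j/∂x^{i_1}⋯∂x^{i_j}` along a list of indices. -/
def derivX (n : ℕ) (l : List (Fin n)) (f : (Fin n → ℝ) × (Fin n → ℝ) → ℂ) :
    (Fin n → ℝ) × (Fin n → ℝ) → ℂ :=
  l.foldr (pderivX n) f

/-- Iterated `y`-derivative `∂^j/∂y^{i_1}⋯∂y^{i_j}` along a list of indices. -/
def derivY (n : ℕ) (l : List (Fin n)) (f : (Fin n → ℝ) × (Fin n → ℝ) → ℂ) :
    (Fin n → ℝ) × (Fin n → ℝ) → ℂ :=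
  l.foldr (pderivY n) f

/-- `C_j(f,g) = (1/(j!·(2π√-1)^j)) Σ_{i_1,…,i_j} (∂^j f/∂y^{i_1}⋯∂y^{i_j})
(∂^j g/∂x^{i_1}⋯∂x^{i_j})`. -/
def Cop (n j : ℕ) (f g : (Fin n → ℝ) × (Fin n → ℝ) → ℂ) :
    (Fin n → ℝ) × (Fin n → ℝ) → ℂ :=
  fun p => (1 / ((Nat.factorial j : ℂ) * (2 * π * Complex.I) ^ j)) *
    ∑ v : Fin j → Fin n, derivY n (List.ofFn v) f p * derivX n (List.ofFn v) g p

/-- `Č_j(f,g) = ((√-1)^j/((2π)^j j!)) Σ_{i_1,…,i_j} (∂^j f/∂x^{i_1}⋯∂x^{i_j})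
(∂^j g/∂y^{i_1}⋯∂y^{i_j})`. -/
def CopCheck (n j : ℕ) (f g : (Fin n → ℝ) × (Fin n → ℝ) → ℂ) :
    (Fin n → ℝ) × (Fin n → ℝ) → ℂ :=
  fun p => (Complex.I ^ j / ((2 * (π : ℂ)) ^ j * (Nat.factorial j : ℂ))) *
    ∑ v : Fin j → Fin n, derivX n (List.ofFn v) f p * derivY n (List.ofFn v) g p

open Set
open scoped ContDiff

/-!
Each summand of `∫ C_j(f,g)` has the form `∫ ∂_y^I f · ∂_x^I g`. The mean over the period box
of a derivative of a periodic function vanishes (divergence theorem on each slice, the opposite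
faces cancelling by periodicity), so integrating by parts `j` times moves every derivative onto
`g`: `∫ ∂_y^I f · ∂_x^I g = (-1)^j ∫ f · ∂_y^I ∂_x^I g`. Mixed partials of a smooth function
commute, so the same computation gives `∫ ∂_x^I f · ∂_y^I g` the same value. Hence
`∫ ∂_y^I f · ∂_x^I g = ∫ ∂_x^I f · ∂_y^I g`, which after swapping the factors of the products is
the termwise form of both identities.
-/

section Calculus

variable {V W E : Type*} [NormedAddCommGroup V] [NormedSpace ℝ V] [NormedAddCommGroup W]
  [NormedSpace ℝ W] [NormedAddCommGroup E] [NormedSpace ℝ E]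

theorem ContDiff.fderiv_apply_const {F : V → E} (hF : ContDiff ℝ ∞ F) (v : V) :
    ContDiff ℝ ∞ (fun p => fderiv ℝ F p v) :=
  (hF.fderiv_right le_rfl).clm_apply contDiff_const

theorem fderiv_fderiv_apply_comm {F : V → E} (hF : ContDiff ℝ 2 F) (p v w : V) :
    fderiv ℝ (fun q => fderiv ℝ F q w) p v = fderiv ℝ (fun q => fderiv ℝ F q v) p w := by
  have hdF : Differentiable ℝ (fderiv ℝ F) :=
    (hF.fderiv_right (m := 1) le_rfl).differentiable one_ne_zero
  have happly (u : V) :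
      fderiv ℝ (fun q => fderiv ℝ F q u) p = (fderiv ℝ (fderiv ℝ F) p).flip u := by
    rw [fderiv_clm_apply (hdF p) (differentiableAt_const u)]
    simp
  rw [happly, happly]
  exact ((hF.contDiffAt.isSymmSndFDerivAt (by simp)).eq w v).symm

theorem fderiv_add_eq_of_forall_add_eq {F : V → E} {c : V} (hc : ∀ p, F (p + c) = F p)
    (p : V) : fderiv ℝ F (p + c) = fderiv ℝ F p := by
  rw [← fderiv_comp_add_right, funext hc]

theorem fderiv_apply_inl {F : V × W → E} (hF : Differentiable ℝ F) (x : V) (y : W) (v : V) :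
    fderiv ℝ F (x, y) (v, 0) = fderiv ℝ (fun x' => F (x', y)) x v := by
  have h : HasFDerivAt (fun x' => F (x', y)) ((fderiv ℝ F (x, y)).comp (.inl ℝ V W)) x :=
    (hF _).hasFDerivAt.comp x (hasFDerivAt_prodMk_left x y)
  rw [h.fderiv]
  rfl

theorem fderiv_apply_inr {F : V × W → E} (hF : Differentiable ℝ F) (x : V) (y : W) (w : W) :
    fderiv ℝ F (x, y) (0, w) = fderiv ℝ (fun y' => F (x, y')) y w := by
  have h : HasFDerivAt (fun y' => F (x, y')) ((fderiv ℝ F (x, y)).comp (.inr ℝ V W)) y :=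
    (hF _).hasFDerivAt.comp y (hasFDerivAt_prodMk_right x y)
  rw [h.fderiv]
  rfl

end Calculus

def iteratedDirDeriv {V E : Type*} [NormedAddCommGroup V] [NormedSpace ℝ V]
    [NormedAddCommGroup E] [NormedSpace ℝ E] (vs : List V) (F : V → E) : V → E :=
  vs.foldr (fun v G p => fderiv ℝ G p v) F

section IteratedDirDeriv

variable {V E : Type*} [NormedAddCommGroup V] [NormedSpace ℝ V]
  [NormedAddCommGroup E] [NormedSpace ℝ E] {F : V → E}

@[simp]
theorem iteratedDirDeriv_nil (F : V → E) : iteratedDirDeriv [] F = F := rfl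

@[simp]
theorem iteratedDirDeriv_cons (v : V) (vs : List V) (F : V → E) :
    iteratedDirDeriv (v :: vs) F = fun p => fderiv ℝ (iteratedDirDeriv vs F) p v := rfl

theorem ContDiff.iteratedDirDeriv (hF : ContDiff ℝ ∞ F) (vs : List V) :
    ContDiff ℝ ∞ (iteratedDirDeriv vs F) := by
  induction vs with
  | nil => exact hF
  | cons v vs ih => exact ih.fderiv_apply_const v

theorem iteratedDirDeriv_fderiv_apply (hF : ContDiff ℝ ∞ F) (v : V) (vs : List V) :
    iteratedDirDeriv vs (fun p => fderiv ℝ F p v) = iteratedDirDeriv (v :: vs) F := by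
  induction vs with
  | nil => rfl
  | cons u vs ih =>
    rw [iteratedDirDeriv_cons, ih]
    exact funext fun p =>
      fderiv_fderiv_apply_comm ((hF.iteratedDirDeriv vs).of_le (by norm_cast)) p u v

theorem iteratedDirDeriv_comm (hF : ContDiff ℝ ∞ F) (vs ws : List V) :
    iteratedDirDeriv vs (iteratedDirDeriv ws F) =
      iteratedDirDeriv ws (iteratedDirDeriv vs F) := by
  induction ws with
  | nil => rfl
  | cons w ws ih =>
    rw [iteratedDirDeriv_cons, iteratedDirDeriv_fderiv_apply (hF.iteratedDirDeriv ws),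
      iteratedDirDeriv_cons, ih]
    rfl

end IteratedDirDeriv

theorem ContinuousLinearMap.eq_zero_of_apply_single_prod {ι κ E : Type*} [Finite ι] [Finite κ]
    [DecidableEq ι] [DecidableEq κ] [NormedAddCommGroup E] [NormedSpace ℝ E]
    (L : (ι → ℝ) × (κ → ℝ) →L[ℝ] E)
    (hfst : ∀ i, L (Pi.single i 1, 0) = 0) (hsnd : ∀ k, L (0, Pi.single k 1) = 0) : L = 0 := by
  refine ContinuousLinearMap.prod_ext ?_ ?_ <;>
    refine ContinuousLinearMap.coe_injective (LinearMap.pi_ext fun i t => ?_)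
  · have h : ((Pi.single i t : ι → ℝ), (0 : κ → ℝ)) = t • (Pi.single i 1, 0) := by
      simp [← Pi.single_smul]
    change L (Pi.single i t, 0) = 0
    rw [h, map_smul, hfst, smul_zero]
  · have h : ((0 : ι → ℝ), (Pi.single i t : κ → ℝ)) = t • (0, Pi.single i 1) := by
      simp [← Pi.single_smul]
    change L (0, Pi.single i t) = 0
    rw [h, map_smul, hsnd, smul_zero]

theorem Fin.insertNth_eq_insertNth_zero_add_single {m : ℕ} {α : Type*} [AddZeroClass α]
    (i : Fin (m + 1)) (a : α) (x : Fin m → α) :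
    i.insertNth (α := fun _ => α) a x = i.insertNth (α := fun _ => α) 0 x + Pi.single i a := by
  refine funext fun j => Fin.succAboveCases i ?_ (fun k => ?_) j <;> simp

theorem box_eq_Icc (n : ℕ) : box n = Icc 0 1 := Set.pi_univ_Icc 0 1

theorem isCompact_box (n : ℕ) : IsCompact (box n) := box_eq_Icc n ▸ isCompact_Icc

theorem integral_box_fderiv_single_eq_zero {E : Type*} [NormedAddCommGroup E] [NormedSpace ℝ E]
    {m : ℕ} {G : (Fin m → ℝ) → E} (hG : ContDiff ℝ 1 G) (i : Fin m)
    (hper : ∀ y, G (y + Pi.single i 1) = G y) :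
    ∫ y in box m, fderiv ℝ G y (Pi.single i 1) = 0 := by
  obtain ⟨m, rfl⟩ : ∃ k, m = k + 1 := ⟨m - 1, by have := i.pos; omega⟩
  -- divergence theorem for the field `G eᵢ`, whose fluxes through `yᵢ = 0` and `yᵢ = 1` cancel
  have hsum (x) : ∑ k, (Pi.single (M := fun _ => _ → _ →L[ℝ] E) i (fderiv ℝ G) k) x
      (Pi.single k 1) = fderiv ℝ G x (Pi.single i 1) := by
    rw [Finset.sum_eq_single i (fun k _ hk => by simp [hk]) (by simp)]
    simp
  have hdiv := integral_divergence_of_hasFDerivAt_off_countable' (a := 0) (b := 1) zero_le_one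
    (Pi.single i G) (Pi.single i (fderiv ℝ G)) ∅ countable_empty
    (fun k => by
      rcases eq_or_ne k i with rfl | hk
      · simpa using hG.continuous.continuousOn
      · rw [Pi.single_eq_of_ne hk]
        exact continuousOn_const)
    (fun x _ k => by
      rcases eq_or_ne k i with rfl | hk
      · simpa using (hG.differentiable one_ne_zero x).hasFDerivAt
      · rw [Pi.single_eq_of_ne hk, Pi.single_eq_of_ne hk]
        exact hasFDerivAt_const (0 : E) x)
    (by
      simp_rw [hsum]
      exact ((hG.continuous_fderiv one_ne_zero).clm_apply continuous_const).integrableOn_Icc)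
  simp_rw [hsum] at hdiv
  rw [box_eq_Icc, hdiv]
  refine Finset.sum_eq_zero fun k _ => ?_
  rcases eq_or_ne k i with rfl | hk
  · simp [Fin.insertNth_eq_insertNth_zero_add_single (a := (1 : ℝ)), hper]
  · simp [hk]

section Torus

variable {n : ℕ} {F u w : (Fin n → ℝ) × (Fin n → ℝ) → ℂ}

theorem Pi.intCast_single_one (i : Fin n) :
    (fun k => ((Pi.single (M := fun _ => ℤ) i 1 k : ℤ) : ℝ)) = Pi.single i 1 :=
  funext fun k => by by_cases h : k = i <;> simp [h]

theorem IsPeriodic2.add_single_fst (hF : IsPeriodic2 n F) (x y : Fin n → ℝ) (i : Fin n) :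
    F (x + Pi.single i 1, y) = F (x, y) := by
  simpa [Pi.intCast_single_one, ← Pi.zero_def] using hF x y (Pi.single i 1) 0

theorem IsPeriodic2.add_single_snd (hF : IsPeriodic2 n F) (x y : Fin n → ℝ) (i : Fin n) :
    F (x, y + Pi.single i 1) = F (x, y) := by
  simpa [Pi.intCast_single_one, ← Pi.zero_def] using hF x y 0 (Pi.single i 1)

theorem IsPeriodic2.mul (hu : IsPeriodic2 n u) (hw : IsPeriodic2 n w) :
    IsPeriodic2 n (fun p => u p * w p) := fun x y a b => by
  simp only [hu x y a b, hw x y a b]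

theorem IsPeriodic2.fderiv_apply (hF : IsPeriodic2 n F) (v : (Fin n → ℝ) × (Fin n → ℝ)) :
    IsPeriodic2 n (fun p => fderiv ℝ F p v) := fun x y a b =>
  congrArg (· v) (fderiv_add_eq_of_forall_add_eq (c := (fun i => (a i : ℝ), fun i => (b i : ℝ)))
    (fun p => hF p.1 p.2 a b) (x, y))

theorem IsPeriodic2.iteratedDirDeriv (hF : IsPeriodic2 n F)
    (vs : List ((Fin n → ℝ) × (Fin n → ℝ))) : IsPeriodic2 n (iteratedDirDeriv vs F) := by
  induction vs with
  | nil => exact hF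
  | cons v vs ih => exact ih.fderiv_apply v

theorem Continuous.integrableOn_box_prod {E : Type*} [NormedAddCommGroup E]
    {φ : (Fin n → ℝ) × (Fin n → ℝ) → E} (hφ : Continuous φ) :
    IntegrableOn φ (box n ×ˢ box n) :=
  hφ.continuousOn.integrableOn_compact ((isCompact_box n).prod (isCompact_box n))

theorem integral_box_prod_eq_zero_of_slices_snd {E : Type*} [NormedAddCommGroup E]
    [NormedSpace ℝ E] {φ : (Fin n → ℝ) × (Fin n → ℝ) → E} (hφ : Continuous φ)
    (h : ∀ x, ∫ y in box n, φ (x, y) = 0) : ∫ p in box n ×ˢ box n, φ p = 0 := by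
  rw [Measure.volume_eq_prod, setIntegral_prod _ hφ.integrableOn_box_prod]
  simp [h]

theorem integral_box_prod_eq_zero_of_slices_fst {E : Type*} [NormedAddCommGroup E]
    [NormedSpace ℝ E] {φ : (Fin n → ℝ) × (Fin n → ℝ) → E} (hφ : Continuous φ)
    (h : ∀ y, ∫ x in box n, φ (x, y) = 0) : ∫ p in box n ×ˢ box n, φ p = 0 := by
  rw [Measure.volume_eq_prod, ← setIntegral_prod_swap, ← Measure.volume_eq_prod]
  exact integral_box_prod_eq_zero_of_slices_snd (hφ.comp continuous_swap) h

theorem integral_box_prod_fderiv_eq_zero (hF : ContDiff ℝ 1 F) (hper : IsPeriodic2 n F) :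
    ∫ p in box n ×ˢ box n, fderiv ℝ F p = 0 := by
  have hFd : Differentiable ℝ F := hF.differentiable one_ne_zero
  have hcont : Continuous (fderiv ℝ F) := hF.continuous_fderiv one_ne_zero
  refine ContinuousLinearMap.eq_zero_of_apply_single_prod _ (fun i => ?_) (fun i => ?_) <;>
    rw [ContinuousLinearMap.integral_apply hcont.integrableOn_box_prod]
  · refine integral_box_prod_eq_zero_of_slices_fst (hcont.clm_apply continuous_const) fun y => ?_
    simp_rw [fderiv_apply_inl hFd]
    exact integral_box_fderiv_single_eq_zero (hF.comp (contDiff_id.prodMk contDiff_const)) i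
      fun x => hper.add_single_fst x y i
  · refine integral_box_prod_eq_zero_of_slices_snd (hcont.clm_apply continuous_const) fun x => ?_
    simp_rw [fderiv_apply_inr hFd]
    exact integral_box_fderiv_single_eq_zero (hF.comp (contDiff_const.prodMk contDiff_id)) i
      fun y => hper.add_single_snd x y i

theorem integral_box_prod_fderiv_mul (hu : ContDiff ℝ 1 u) (hw : ContDiff ℝ 1 w)
    (hpu : IsPeriodic2 n u) (hpw : IsPeriodic2 n w) (v : (Fin n → ℝ) × (Fin n → ℝ)) :
    ∫ p in box n ×ˢ box n, fderiv ℝ u p v * w p =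
      -∫ p in box n ×ˢ box n, u p * fderiv ℝ w p v := by
  have hcont := (hu.mul hw).continuous_fderiv one_ne_zero
  have hzero : ∫ p in box n ×ˢ box n, fderiv ℝ (fun q => u q * w q) p v = 0 := by
    rw [← ContinuousLinearMap.integral_apply hcont.integrableOn_box_prod,
      integral_box_prod_fderiv_eq_zero (hu.mul hw) (hpu.mul hpw), zero_apply]
  have hleibniz (p) : fderiv ℝ (fun q => u q * w q) p v =
      fderiv ℝ u p v * w p + u p * fderiv ℝ w p v := by
    rw [fderiv_fun_mul (hu.differentiable one_ne_zero p) (hw.differentiable one_ne_zero p)]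
    simp only [add_apply, smul_apply, smul_eq_mul]
    ring
  have hint_u : IntegrableOn (fun p => fderiv ℝ u p v * w p) (box n ×ˢ box n) :=
    (((hu.continuous_fderiv one_ne_zero).clm_apply continuous_const).mul
      hw.continuous).integrableOn_box_prod
  have hint_w : IntegrableOn (fun p => u p * fderiv ℝ w p v) (box n ×ˢ box n) :=
    (hu.continuous.mul
      ((hw.continuous_fderiv one_ne_zero).clm_apply continuous_const)).integrableOn_box_prod
  simp_rw [hleibniz] at hzero
  rw [integral_add hint_u hint_w] at hzero
  exact eq_neg_of_add_eq_zero_left hzero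

theorem integral_box_prod_iteratedDirDeriv_mul (hu : ContDiff ℝ ∞ u) (hw : ContDiff ℝ ∞ w)
    (hpu : IsPeriodic2 n u) (hpw : IsPeriodic2 n w) (vs : List ((Fin n → ℝ) × (Fin n → ℝ))) :
    ∫ p in box n ×ˢ box n, iteratedDirDeriv vs u p * w p =
      (-1) ^ vs.length * ∫ p in box n ×ˢ box n, u p * iteratedDirDeriv vs w p := by
  induction vs generalizing w with
  | nil => simp
  | cons v vs ih =>
    rw [iteratedDirDeriv_cons, integral_box_prod_fderiv_mul
      ((hu.iteratedDirDeriv vs).of_le (by norm_cast)) (hw.of_le (by norm_cast))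
      (hpu.iteratedDirDeriv vs) hpw,
      ih (hw.fderiv_apply_const v) (hpw.fderiv_apply v), iteratedDirDeriv_fderiv_apply hw,
      List.length_cons, pow_succ]
    ring

theorem derivX_eq_iteratedDirDeriv (l : List (Fin n)) (F : (Fin n → ℝ) × (Fin n → ℝ) → ℂ) :
    derivX n l F = iteratedDirDeriv (l.map fun i => (Pi.single i 1, 0)) F := by
  simp only [derivX, iteratedDirDeriv, List.foldr_map]
  rfl

theorem derivY_eq_iteratedDirDeriv (l : List (Fin n)) (F : (Fin n → ℝ) × (Fin n → ℝ) → ℂ) :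
    derivY n l F = iteratedDirDeriv (l.map fun i => (0, Pi.single i 1)) F := by
  simp only [derivY, iteratedDirDeriv, List.foldr_map]
  rfl

theorem ContDiff.continuous_derivX (hF : ContDiff ℝ ∞ F) (l : List (Fin n)) :
    Continuous (derivX n l F) :=
  derivX_eq_iteratedDirDeriv l F ▸ (hF.iteratedDirDeriv _).continuous

theorem ContDiff.continuous_derivY (hF : ContDiff ℝ ∞ F) (l : List (Fin n)) :
    Continuous (derivY n l F) :=
  derivY_eq_iteratedDirDeriv l F ▸ (hF.iteratedDirDeriv _).continuous

theorem integral_box_prod_derivY_mul_derivX (hu : ContDiff ℝ ∞ u) (hw : ContDiff ℝ ∞ w)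
    (hpu : IsPeriodic2 n u) (hpw : IsPeriodic2 n w) (l : List (Fin n)) :
    ∫ p in box n ×ˢ box n, derivY n l u p * derivX n l w p =
      ∫ p in box n ×ˢ box n, derivX n l u p * derivY n l w p := by
  simp only [derivX_eq_iteratedDirDeriv, derivY_eq_iteratedDirDeriv]
  rw [integral_box_prod_iteratedDirDeriv_mul hu (hw.iteratedDirDeriv _) hpu
      (hpw.iteratedDirDeriv _),
    integral_box_prod_iteratedDirDeriv_mul hu (hw.iteratedDirDeriv _) hpu
      (hpw.iteratedDirDeriv _),
    iteratedDirDeriv_comm hw, List.length_map, List.length_map]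

theorem integral_box_prod_const_mul_sum_congr {ι : Type*} [Fintype ι] (c : ℂ)
    {φ ψ : ι → (Fin n → ℝ) × (Fin n → ℝ) → ℂ} (hφ : ∀ k, Continuous (φ k))
    (hψ : ∀ k, Continuous (ψ k))
    (h : ∀ k, ∫ p in box n ×ˢ box n, φ k p = ∫ p in box n ×ˢ box n, ψ k p) :
    ∫ p in box n ×ˢ box n, c * ∑ k, φ k p = ∫ p in box n ×ˢ box n, c * ∑ k, ψ k p := by
  rw [integral_const_mul, integral_const_mul,
    integral_finsetSum _ fun k _ => (hφ k).integrableOn_box_prod,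
    integral_finsetSum _ fun k _ => (hψ k).integrableOn_box_prod,
    Finset.sum_congr rfl fun k _ => h k]

end Torus

theorem statement12_general (n : ℕ) (f g : (Fin n → ℝ) × (Fin n → ℝ) → ℂ)
    (hf : ContDiff ℝ (⊤ : ℕ∞) f) (hg : ContDiff ℝ (⊤ : ℕ∞) g)
    (hperf : IsPeriodic2 n f) (hperg : IsPeriodic2 n g) :
    ∀ j : ℕ,
      (∫ p in (box n) ×ˢ (box n), Cop n j f g p) =
        (∫ p in (box n) ×ˢ (box n), Cop n j g f p) ∧
      (∫ p in (box n) ×ˢ (box n), CopCheck n j f g p) =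
        (∫ p in (box n) ×ˢ (box n), CopCheck n j g f p) := by
  intro j
  constructor
  · refine integral_box_prod_const_mul_sum_congr _
      (fun _ => (hf.continuous_derivY _).mul (hg.continuous_derivX _))
      (fun _ => (hg.continuous_derivY _).mul (hf.continuous_derivX _)) fun v => ?_
    rw [integral_box_prod_derivY_mul_derivX hf hg hperf hperg]
    simp_rw [mul_comm]
  · refine integral_box_prod_const_mul_sum_congr _
      (fun _ => (hf.continuous_derivX _).mul (hg.continuous_derivY _))
      (fun _ => (hg.continuous_derivX _).mul (hf.continuous_derivY _)) fun v => ?_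
    rw [← integral_box_prod_derivY_mul_derivX hg hf hperg hperf]
    simp_rw [mul_comm]

/-- For smooth `ℤ^{2n}`-periodic `f, g` and every `j ≥ 0`,
`∫_{[0,1]^{2n}} C_j(f,g) = ∫_{[0,1]^{2n}} C_j(g,f)` and
`∫_{[0,1]^{2n}} Č_j(f,g) = ∫_{[0,1]^{2n}} Č_j(g,f)`; consequently
`Tr(f) = ∫_X f e^{ω/ℏ}` is a trace map for both `⋆` and `⋆̌`. -/
theorem statement12 (n : ℕ) (hn : 1 ≤ n) (f g : (Fin n → ℝ) × (Fin n → ℝ) → ℂ)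
    (hf : ContDiff ℝ (⊤ : ℕ∞) f) (hg : ContDiff ℝ (⊤ : ℕ∞) g)
    (hperf : IsPeriodic2 n f) (hperg : IsPeriodic2 n g) :
    ∀ j : ℕ,
      (∫ p in (box n) ×ˢ (box n), Cop n j f g p) =
        (∫ p in (box n) ×ˢ (box n), Cop n j g f p) ∧
      (∫ p in (box n) ×ˢ (box n), CopCheck n j f g p) =
        (∫ p in (box n) ×ˢ (box n), CopCheck n j g f p) :=
  statement12_general n f g hf hg hperf hperg
end
end

section
/- Let f, g : ℝ^n × ℝ^n → ℂ be smooth and ℤ^{2n}-periodic. Then for every integer N ≥ 0, Σ_{a+b=N, a,b≥0} (1/a!) Δ^a (C_b(f,g)) = Σ_{a+b+c=N, a,b,c≥0} (1/(b!·c!)) Č_a(Δ^b f, Δ^c g). (This says the formal operator e^{ℏΔ} intertwines the star products ⋆ and ⋆̌, order by order in ℏ.) -/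
open MeasureTheory Complex
open scoped Real

noncomputable section

/-- The operator `Δ = (√-1/(2π)) Σ_i ∂²/∂x^i ∂y^i`. -/
def Del (n : ℕ) (f : (Fin n → ℝ) × (Fin n → ℝ) → ℂ) :
    (Fin n → ℝ) × (Fin n → ℝ) → ℂ :=
  fun p => Complex.I / (2 * π) * ∑ i, pderivX n i (pderivY n i f) p


/-!
Write `c = √-1/(2π)` and, for `a, b ≥ 0`,
`P_{a,b}(u, v) = Σ_{V ∈ [n]^a, W ∈ [n]^b} ∂_x^V ∂_y^W u · ∂_y^V ∂_x^W v`,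
so that `C_b = (-c)^b / b! · P_{0,b}` and `Č_a = c^a / a! · P_{a,0}`. Leibniz's rule and the
symmetry of second derivatives give the ladder relation
`Δ P_{a,b}(u, v) = P_{a,b}(Δu, v) + P_{a,b}(u, Δv) + c · (P_{a+1,b}(u, v) + P_{a,b+1}(u, v))`.
So the linear map sending the monomial `X₀^p X₁^q X₂^a X₃^b` to `c^{a+b} P_{a,b}(Δ^p f, Δ^q g)`
turns multiplication by `X₀ + X₁ + X₂ + X₃` into `Δ`. Both sides of the identity are then images of
`(X₀ + X₁ + X₂)^N / N!`: the left one through the binomial expansion of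
`((X₀ + X₁ + X₂ + X₃) - X₃)^N`, the right one through that of `(X₂ + (X₀ + X₁))^N`.
-/

open Finset
open scoped ContDiff Nat

theorem inv_factorial_smul_add_pow {K A : Type*} [Field K] [CharZero K] [CommSemiring A]
    [Algebra K A] (x y : A) (N : ℕ) :
    (N ! : K)⁻¹ • (x + y) ^ N =
      ∑ ab ∈ antidiagonal N, ((ab.1 ! : K)⁻¹ * (ab.2 ! : K)⁻¹) • (x ^ ab.1 * y ^ ab.2) := by
  rw [(Commute.all x y).add_pow', smul_sum]
  refine sum_congr rfl fun ab hab => ?_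
  obtain ⟨a, b⟩ := ab
  obtain rfl : a + b = N := mem_antidiagonal.mp hab
  rw [← Nat.cast_smul_eq_nsmul K, smul_smul]
  congr 1
  have hchoose : ((a + b).choose a : K) * a ! * b ! = (a + b)! := by
    rw [Nat.choose_symm_add]
    exact_mod_cast Nat.add_choose_mul_factorial_mul_factorial a b
  have hpos : ((a + b).choose a : K) ≠ 0 := by
    exact_mod_cast (Nat.choose_pos (Nat.le_add_right a b)).ne'
  rw [← hchoose]
  field_simp

section DirDeriv

variable {E : Type*} [NormedAddCommGroup E] [NormedSpace ℝ E]

theorem contDiff_finset_sum {F ι : Type*} [NormedAddCommGroup F] [NormedSpace ℝ F]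
    {k : WithTop ℕ∞} {s : Finset ι} {f : ι → E → F} (h : ∀ i ∈ s, ContDiff ℝ k (f i)) :
    ContDiff ℝ k (∑ i ∈ s, f i) := by
  rw [sum_fn]
  exact ContDiff.sum h

def dirDeriv (w : E) (f : E → ℂ) : E → ℂ := fun p => fderiv ℝ f p w

theorem ContDiff.dirDeriv {f : E → ℂ} (hf : ContDiff ℝ ∞ f) (w : E) :
    ContDiff ℝ ∞ (dirDeriv w f) :=
  (hf.fderiv_right le_rfl).clm_apply contDiff_const

theorem dirDeriv_comm {f : E → ℂ} (hf : ContDiff ℝ 2 f) (v w : E) :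
    dirDeriv v (dirDeriv w f) = dirDeriv w (dirDeriv v f) := by
  funext p
  have hdiff : Differentiable ℝ (fderiv ℝ f) :=
    (hf.fderiv_right (m := 1) (by norm_num)).differentiable (by norm_num)
  have key : ∀ u : E, fderiv ℝ (fun q => fderiv ℝ f q u) p = (fderiv ℝ (fderiv ℝ f) p).flip u :=
    fun u => by simpa using fderiv_clm_apply (hdiff p) (differentiableAt_const u)
  change fderiv ℝ (fun q => fderiv ℝ f q w) p v = fderiv ℝ (fun q => fderiv ℝ f q v) p w
  rw [key, key]
  exact (hf.contDiffAt.isSymmSndFDerivAt (by simp)).eq v w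

theorem dirDeriv_add {u v : E → ℂ} (hu : Differentiable ℝ u) (hv : Differentiable ℝ v) (w : E) :
    dirDeriv w (u + v) = dirDeriv w u + dirDeriv w v := by
  funext p
  simp [dirDeriv, fderiv_add (hu p) (hv p)]

theorem dirDeriv_const_smul {u : E → ℂ} (hu : Differentiable ℝ u) (c : ℂ) (w : E) :
    dirDeriv w (c • u) = c • dirDeriv w u := by
  funext p
  simp [dirDeriv, fderiv_const_smul (hu p)]

theorem dirDeriv_sum {ι : Type*} {s : Finset ι} {F : ι → E → ℂ}
    (hF : ∀ t ∈ s, Differentiable ℝ (F t)) (w : E) :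
    dirDeriv w (∑ t ∈ s, F t) = ∑ t ∈ s, dirDeriv w (F t) := by
  funext p
  simp [dirDeriv, fderiv_sum (fun t ht => hF t ht p)]

theorem dirDeriv_mul {u v : E → ℂ} (hu : Differentiable ℝ u) (hv : Differentiable ℝ v) (w : E) :
    dirDeriv w (u * v) = dirDeriv w u * v + u * dirDeriv w v := by
  funext p
  simp [dirDeriv, fderiv_mul (hu p) (hv p)]
  ring

end DirDeriv

section IterDirDeriv

variable {E ι : Type*} [NormedAddCommGroup E] [NormedSpace ℝ E]

def iterDirDeriv (e : ι → E) (l : List ι) (f : E → ℂ) : E → ℂ :=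
  l.foldr (fun i => dirDeriv (e i)) f

variable {e : ι → E}

theorem iterDirDeriv_cons (i : ι) (l : List ι) (f : E → ℂ) :
    iterDirDeriv e (i :: l) f = dirDeriv (e i) (iterDirDeriv e l f) := rfl

theorem ContDiff.iterDirDeriv {f : E → ℂ} (hf : ContDiff ℝ ∞ f) (l : List ι) :
    ContDiff ℝ ∞ (iterDirDeriv e l f) := by
  induction l with
  | nil => exact hf
  | cons i l ih => exact ih.dirDeriv (e i)

theorem iterDirDeriv_dirDeriv {f : E → ℂ} (hf : ContDiff ℝ ∞ f) (l : List ι) (w : E) :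
    iterDirDeriv e l (dirDeriv w f) = dirDeriv w (iterDirDeriv e l f) := by
  induction l with
  | nil => rfl
  | cons i l ih =>
    rw [iterDirDeriv_cons, iterDirDeriv_cons, ih,
      dirDeriv_comm ((hf.iterDirDeriv l).of_le (WithTop.coe_le_coe.mpr le_top))]

theorem iterDirDeriv_const_smul {u : E → ℂ} (hu : ContDiff ℝ ∞ u) (c : ℂ) (l : List ι) :
    iterDirDeriv e l (c • u) = c • iterDirDeriv e l u := by
  induction l with
  | nil => rfl
  | cons i l ih =>
    rw [iterDirDeriv_cons, iterDirDeriv_cons, ih,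
      dirDeriv_const_smul ((hu.iterDirDeriv l).differentiable (by norm_num))]

theorem iterDirDeriv_sum {κ : Type*} {s : Finset κ} {F : κ → E → ℂ}
    (hF : ∀ t ∈ s, ContDiff ℝ ∞ (F t)) (l : List ι) :
    iterDirDeriv e l (∑ t ∈ s, F t) = ∑ t ∈ s, iterDirDeriv e l (F t) := by
  induction l with
  | nil => rfl
  | cons i l ih =>
    simp only [iterDirDeriv_cons, ih,
      dirDeriv_sum fun t ht => ((hF t ht).iterDirDeriv l).differentiable (by norm_num)]

end IterDirDeriv

section PhaseSpace

abbrev PhaseSpace (n : ℕ) := (Fin n → ℝ) × (Fin n → ℝ)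

variable {n : ℕ}

def xDir (n : ℕ) (i : Fin n) : PhaseSpace n := (Pi.single i 1, 0)

def yDir (n : ℕ) (i : Fin n) : PhaseSpace n := (0, Pi.single i 1)

theorem pderivX_eq_dirDeriv (i : Fin n) (f : PhaseSpace n → ℂ) :
    pderivX n i f = dirDeriv (xDir n i) f := rfl

theorem pderivY_eq_dirDeriv (i : Fin n) (f : PhaseSpace n → ℂ) :
    pderivY n i f = dirDeriv (yDir n i) f := rfl

theorem derivX_eq_iterDirDeriv (l : List (Fin n)) (f : PhaseSpace n → ℂ) :
    derivX n l f = iterDirDeriv (xDir n) l f := rfl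

theorem derivY_eq_iterDirDeriv (l : List (Fin n)) (f : PhaseSpace n → ℂ) :
    derivY n l f = iterDirDeriv (yDir n) l f := rfl

theorem derivX_cons (i : Fin n) (l : List (Fin n)) (f : PhaseSpace n → ℂ) :
    derivX n (i :: l) f = pderivX n i (derivX n l f) := rfl

theorem derivY_cons (i : Fin n) (l : List (Fin n)) (f : PhaseSpace n → ℂ) :
    derivY n (i :: l) f = pderivY n i (derivY n l f) := rfl

theorem Del_eq (f : PhaseSpace n → ℂ) :
    Del n f = (I / (2 * π)) • ∑ i, dirDeriv (xDir n i) (dirDeriv (yDir n i) f) := by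
  funext p
  simp only [Del, Pi.smul_apply, Finset.sum_apply, smul_eq_mul]
  rfl

theorem contDiff_Del {f : PhaseSpace n → ℂ} (hf : ContDiff ℝ ∞ f) : ContDiff ℝ ∞ (Del n f) := by
  rw [Del_eq]
  exact contDiff_const.smul (contDiff_finset_sum fun i _ => (hf.dirDeriv _).dirDeriv _)

theorem contDiff_iterate_Del {f : PhaseSpace n → ℂ} (hf : ContDiff ℝ ∞ f) (k : ℕ) :
    ContDiff ℝ ∞ ((Del n)^[k] f) := by
  induction k with
  | zero => exact hf
  | succ k ih => rw [Function.iterate_succ_apply']; exact contDiff_Del ih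

theorem Del_add {u v : PhaseSpace n → ℂ} (hu : ContDiff ℝ ∞ u) (hv : ContDiff ℝ ∞ v) :
    Del n (u + v) = Del n u + Del n v := by
  have hd : ∀ {w : PhaseSpace n → ℂ}, ContDiff ℝ ∞ w → Differentiable ℝ w :=
    fun hw => hw.differentiable (by norm_num)
  simp only [Del_eq, dirDeriv_add (hd hu) (hd hv),
    dirDeriv_add (hd (hu.dirDeriv _)) (hd (hv.dirDeriv _)), sum_add_distrib, smul_add]

theorem Del_const_smul {u : PhaseSpace n → ℂ} (hu : ContDiff ℝ ∞ u) (c : ℂ) :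
    Del n (c • u) = c • Del n u := by
  simp only [Del_eq, dirDeriv_const_smul (hu.differentiable (by norm_num)),
    dirDeriv_const_smul ((hu.dirDeriv _).differentiable (by norm_num)), ← smul_sum,
    smul_comm c]

theorem Del_sum {κ : Type*} {s : Finset κ} {F : κ → PhaseSpace n → ℂ}
    (hF : ∀ t ∈ s, ContDiff ℝ ∞ (F t)) :
    Del n (∑ t ∈ s, F t) = ∑ t ∈ s, Del n (F t) := by
  simp only [Del_eq, dirDeriv_sum fun t ht => (hF t ht).differentiable (by norm_num),
    dirDeriv_sum fun t ht => ((hF t ht).dirDeriv _).differentiable (by norm_num), ← smul_sum]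
  rw [sum_comm]

theorem Del_mul {u v : PhaseSpace n → ℂ} (hu : ContDiff ℝ ∞ u) (hv : ContDiff ℝ ∞ v) :
    Del n (u * v) = Del n u * v + u * Del n v + (I / (2 * π)) •
      ∑ i, (pderivX n i u * pderivY n i v + pderivY n i u * pderivX n i v) := by
  have hd : ∀ {w : PhaseSpace n → ℂ}, ContDiff ℝ ∞ w → Differentiable ℝ w :=
    fun hw => hw.differentiable (by norm_num)
  have hterm : ∀ i, dirDeriv (xDir n i) (dirDeriv (yDir n i) (u * v)) =
      dirDeriv (xDir n i) (dirDeriv (yDir n i) u) * v +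
        u * dirDeriv (xDir n i) (dirDeriv (yDir n i) v) +
        (pderivX n i u * pderivY n i v + pderivY n i u * pderivX n i v) := by
    intro i
    rw [dirDeriv_mul (hd hu) (hd hv),
      dirDeriv_add (hd (w := dirDeriv _ u * v) ((hu.dirDeriv _).mul hv))
        (hd (w := u * dirDeriv _ v) (hu.mul (hv.dirDeriv _))),
      dirDeriv_mul (hd (hu.dirDeriv _)) (hd hv), dirDeriv_mul (hd hu) (hd (hv.dirDeriv _))]
    simp only [pderivX_eq_dirDeriv, pderivY_eq_dirDeriv]
    ring
  simp only [Del_eq, hterm, sum_add_distrib, ← sum_mul, ← mul_sum,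
    smul_add, smul_mul_assoc, mul_smul_comm]

theorem iterDirDeriv_Del {ι : Type*} {e : ι → PhaseSpace n} {u : PhaseSpace n → ℂ}
    (hu : ContDiff ℝ ∞ u) (l : List ι) :
    iterDirDeriv e l (Del n u) = Del n (iterDirDeriv e l u) := by
  rw [Del_eq, Del_eq,
    iterDirDeriv_const_smul (contDiff_finset_sum fun i _ => (hu.dirDeriv _).dirDeriv _),
    iterDirDeriv_sum fun i _ => (hu.dirDeriv _).dirDeriv _]
  simp only [iterDirDeriv_dirDeriv (hu.dirDeriv _), iterDirDeriv_dirDeriv hu]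

end PhaseSpace

theorem Fintype.sum_fun_fin_succ {α M : Type*} [Fintype α] [AddCommMonoid M]
    (b : ℕ) (F : (Fin (b + 1) → α) → M) :
    ∑ W, F W = ∑ i, ∑ W : Fin b → α, F (Fin.cons i W) := by
  rw [← Fintype.sum_prod_type']
  exact (Fintype.sum_equiv (Fin.consEquiv fun _ => α) _ _ fun _ => rfl).symm

section Pairing

variable {n : ℕ} {u v : PhaseSpace n → ℂ}

def pairing (n a b : ℕ) (u v : PhaseSpace n → ℂ) : PhaseSpace n → ℂ :=
  ∑ V : Fin a → Fin n, ∑ W : Fin b → Fin n,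
    derivX n (List.ofFn V) (derivY n (List.ofFn W) u) *
      derivY n (List.ofFn V) (derivX n (List.ofFn W) v)

theorem contDiff_derivX_derivY (hu : ContDiff ℝ ∞ u) (l l' : List (Fin n)) :
    ContDiff ℝ ∞ (derivX n l (derivY n l' u)) :=
  (hu.iterDirDeriv l').iterDirDeriv l

theorem contDiff_derivY_derivX (hu : ContDiff ℝ ∞ u) (l l' : List (Fin n)) :
    ContDiff ℝ ∞ (derivY n l (derivX n l' u)) :=
  (hu.iterDirDeriv l').iterDirDeriv l

theorem dirDeriv_derivX_derivY (hu : ContDiff ℝ ∞ u) (w : PhaseSpace n) (l l' : List (Fin n)) :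
    dirDeriv w (derivX n l (derivY n l' u)) = derivX n l (derivY n l' (dirDeriv w u)) := by
  simp only [derivX_eq_iterDirDeriv, derivY_eq_iterDirDeriv, iterDirDeriv_dirDeriv hu,
    iterDirDeriv_dirDeriv (hu.iterDirDeriv l')]

theorem dirDeriv_derivY_derivX (hu : ContDiff ℝ ∞ u) (w : PhaseSpace n) (l l' : List (Fin n)) :
    dirDeriv w (derivY n l (derivX n l' u)) = derivY n l (derivX n l' (dirDeriv w u)) := by
  simp only [derivX_eq_iterDirDeriv, derivY_eq_iterDirDeriv, iterDirDeriv_dirDeriv hu,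
    iterDirDeriv_dirDeriv (hu.iterDirDeriv l')]

theorem Del_derivX_derivY (hu : ContDiff ℝ ∞ u) (l l' : List (Fin n)) :
    Del n (derivX n l (derivY n l' u)) = derivX n l (derivY n l' (Del n u)) := by
  simp only [derivX_eq_iterDirDeriv, derivY_eq_iterDirDeriv, iterDirDeriv_Del hu,
    iterDirDeriv_Del (hu.iterDirDeriv l')]

theorem Del_derivY_derivX (hu : ContDiff ℝ ∞ u) (l l' : List (Fin n)) :
    Del n (derivY n l (derivX n l' u)) = derivY n l (derivX n l' (Del n u)) := by
  simp only [derivX_eq_iterDirDeriv, derivY_eq_iterDirDeriv, iterDirDeriv_Del hu,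
    iterDirDeriv_Del (hu.iterDirDeriv l')]

theorem contDiff_pairing (hu : ContDiff ℝ ∞ u) (hv : ContDiff ℝ ∞ v) (a b : ℕ) :
    ContDiff ℝ ∞ (pairing n a b u v) :=
  contDiff_finset_sum fun _ _ => contDiff_finset_sum fun _ _ =>
    (contDiff_derivX_derivY hu _ _).mul (contDiff_derivY_derivX hv _ _)

theorem sum_pairing_pderivX_pderivY (hu : ContDiff ℝ ∞ u) (hv : ContDiff ℝ ∞ v) (a b : ℕ) :
    ∑ i, pairing n a b (pderivX n i u) (pderivY n i v) = pairing n (a + 1) b u v := by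
  simp only [pairing, Fintype.sum_fun_fin_succ a, List.ofFn_cons]
  refine sum_congr rfl fun i _ => sum_congr rfl fun V _ =>
    sum_congr rfl fun W _ => ?_
  simp only [derivX_cons, derivY_cons, pderivX_eq_dirDeriv, pderivY_eq_dirDeriv,
    dirDeriv_derivX_derivY hu, dirDeriv_derivY_derivX hv]

theorem sum_pairing_pderivY_pderivX (hu : ContDiff ℝ ∞ u) (hv : ContDiff ℝ ∞ v) (a b : ℕ) :
    ∑ i, pairing n a b (pderivY n i u) (pderivX n i v) = pairing n a (b + 1) u v := by
  simp only [pairing, Fintype.sum_fun_fin_succ b, List.ofFn_cons]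
  rw [sum_comm]
  refine sum_congr rfl fun V _ => sum_congr rfl fun i _ =>
    sum_congr rfl fun W _ => ?_
  simp only [pderivX_eq_dirDeriv, pderivY_eq_dirDeriv, derivX_eq_iterDirDeriv,
    derivY_eq_iterDirDeriv, iterDirDeriv_cons, iterDirDeriv_dirDeriv hu, iterDirDeriv_dirDeriv hv]

theorem Del_pairing (hu : ContDiff ℝ ∞ u) (hv : ContDiff ℝ ∞ v) (a b : ℕ) :
    Del n (pairing n a b u v) = pairing n a b (Del n u) v + pairing n a b u (Del n v) +
      (I / (2 * π)) • (pairing n (a + 1) b u v + pairing n a (b + 1) u v) := by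
  rw [← sum_pairing_pderivX_pderivY hu hv, ← sum_pairing_pderivY_pderivX hu hv, ← sum_add_distrib]
  have hterm : ∀ (V : Fin a → Fin n) (W : Fin b → Fin n), ContDiff ℝ ∞
      (derivX n (List.ofFn V) (derivY n (List.ofFn W) u) *
        derivY n (List.ofFn V) (derivX n (List.ofFn W) v)) := fun V W =>
    (contDiff_derivX_derivY hu _ _).mul (contDiff_derivY_derivX hv _ _)
  rw [pairing, Del_sum fun V _ => contDiff_finset_sum fun W _ => hterm V W]
  rw [sum_congr rfl fun V _ => Del_sum fun W _ => hterm V W]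
  simp only [Del_mul (contDiff_derivX_derivY hu _ _) (contDiff_derivY_derivX hv _ _),
    Del_derivX_derivY hu, Del_derivY_derivX hv, pderivX_eq_dirDeriv, pderivY_eq_dirDeriv,
    dirDeriv_derivX_derivY hu, dirDeriv_derivY_derivX hv, pairing, sum_add_distrib]
  have hswap : ∀ F : Fin n → (Fin a → Fin n) → (Fin b → Fin n) → PhaseSpace n → ℂ,
      ∑ i, ∑ V, ∑ W, F i V W = ∑ V, ∑ W, ∑ i, F i V W := fun F => by
    rw [sum_comm]
    exact sum_congr rfl fun _ _ => sum_comm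
  rw [hswap, hswap]
  simp only [smul_add, smul_sum, sum_add_distrib]

end Pairing

section PairingMap

open MvPolynomial

variable {n : ℕ}

theorem Cop_eq_smul_pairing (b : ℕ) (u v : PhaseSpace n → ℂ) :
    Cop n b u v = (1 / ((b ! : ℂ) * (2 * π * I) ^ b)) • pairing n 0 b u v := by
  funext p
  simp [Cop, pairing, Finset.sum_apply, derivX, derivY]

theorem CopCheck_eq_smul_pairing (a : ℕ) (u v : PhaseSpace n → ℂ) :
    CopCheck n a u v = (I ^ a / ((2 * (π : ℂ)) ^ a * (a ! : ℂ))) • pairing n a 0 u v := by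
  funext p
  simp [CopCheck, pairing, Finset.sum_apply, derivX, derivY]

variable {f g : PhaseSpace n → ℂ}

def pairingTerm (n : ℕ) (f g : PhaseSpace n → ℂ) (d : Fin 4 →₀ ℕ) : PhaseSpace n → ℂ :=
  (I / (2 * π)) ^ (d 2 + d 3) • pairing n (d 2) (d 3) ((Del n)^[d 0] f) ((Del n)^[d 1] g)

theorem contDiff_pairingTerm (hf : ContDiff ℝ ∞ f) (hg : ContDiff ℝ ∞ g) (d : Fin 4 →₀ ℕ) :
    ContDiff ℝ ∞ (pairingTerm n f g d) :=
  contDiff_const.smul (contDiff_pairing (contDiff_iterate_Del hf _) (contDiff_iterate_Del hg _) _ _)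

theorem Del_pairingTerm (hf : ContDiff ℝ ∞ f) (hg : ContDiff ℝ ∞ g) (d : Fin 4 →₀ ℕ) :
    Del n (pairingTerm n f g d) = ∑ i, pairingTerm n f g (d + Finsupp.single i 1) := by
  rw [pairingTerm, Del_const_smul (contDiff_pairing (contDiff_iterate_Del hf _)
    (contDiff_iterate_Del hg _) _ _), Del_pairing (contDiff_iterate_Del hf _)
    (contDiff_iterate_Del hg _), Fin.sum_univ_four]
  simp only [pairingTerm, Finsupp.add_apply, Finsupp.single_apply, Fin.reduceEq, if_true,
    if_false, add_zero, ← Function.iterate_succ_apply' (Del n), Nat.succ_eq_add_one]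
  rw [smul_add, smul_add, smul_smul, ← pow_succ, smul_add, add_right_comm (d 2) 1,
    ← add_assoc (d 2) (d 3)]
  abel

def pairingMap (n : ℕ) (f g : PhaseSpace n → ℂ) : MvPolynomial (Fin 4) ℂ →ₗ[ℂ] PhaseSpace n → ℂ :=
  (basisMonomials (Fin 4) ℂ).constr ℂ (pairingTerm n f g)

theorem pairingMap_monomial (d : Fin 4 →₀ ℕ) (c : ℂ) :
    pairingMap n f g (monomial d c) = c • pairingTerm n f g d := by
  have h := (basisMonomials (Fin 4) ℂ).constr_basis ℂ (pairingTerm n f g) d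
  rw [coe_basisMonomials] at h
  rw [show monomial d c = c • monomial d 1 by rw [smul_monomial, smul_eq_mul, mul_one], map_smul,
    pairingMap, h]

theorem contDiff_pairingMap (hf : ContDiff ℝ ∞ f) (hg : ContDiff ℝ ∞ g)
    (P : MvPolynomial (Fin 4) ℂ) : ContDiff ℝ ∞ (pairingMap n f g P) := by
  induction P using MvPolynomial.induction_on' with
  | monomial d c =>
    rw [pairingMap_monomial]
    exact contDiff_const.smul (contDiff_pairingTerm hf hg d)
  | add P Q hP hQ => rw [map_add]; exact hP.add hQ

theorem Del_pairingMap (hf : ContDiff ℝ ∞ f) (hg : ContDiff ℝ ∞ g) (P : MvPolynomial (Fin 4) ℂ) :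
    Del n (pairingMap n f g P) = pairingMap n f g ((X 0 + X 1 + X 2 + X 3) * P) := by
  induction P using MvPolynomial.induction_on' with
  | monomial d c =>
    have hX : ∀ i, X i * monomial d c = monomial (d + Finsupp.single i 1) c := fun i => by
      rw [X, monomial_mul, one_mul, add_comm]
    rw [pairingMap_monomial, Del_const_smul (contDiff_pairingTerm hf hg d), Del_pairingTerm hf hg,
      add_mul, add_mul, add_mul, hX, hX, hX, hX]
    simp only [map_add, pairingMap_monomial, Fin.sum_univ_four, smul_add]
  | add P Q hP hQ =>
    rw [map_add, Del_add (contDiff_pairingMap hf hg P) (contDiff_pairingMap hf hg Q), hP, hQ,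
      mul_add, map_add]

theorem iterate_Del_pairingMap (hf : ContDiff ℝ ∞ f) (hg : ContDiff ℝ ∞ g) (k : ℕ)
    (P : MvPolynomial (Fin 4) ℂ) :
    (Del n)^[k] (pairingMap n f g P) = pairingMap n f g ((X 0 + X 1 + X 2 + X 3) ^ k * P) := by
  induction k with
  | zero => rw [Function.iterate_zero_apply, pow_zero, one_mul]
  | succ k ih =>
    rw [Function.iterate_succ_apply', ih, Del_pairingMap hf hg, ← mul_assoc, ← pow_succ']

theorem Cop_eq_pairingMap (b : ℕ) :
    Cop n b f g = pairingMap n f g ((b ! : ℂ)⁻¹ • (-X 3) ^ b) := by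
  have hsign : (2 * π * I : ℂ)⁻¹ = -1 * (I / (2 * π)) := by
    field_simp
    rw [I_sq]
    ring
  rw [← neg_one_smul ℂ (X 3 : MvPolynomial (Fin 4) ℂ), smul_pow, smul_smul, X_pow_eq_monomial,
    smul_monomial, pairingMap_monomial, Cop_eq_smul_pairing, pairingTerm]
  simp only [Finsupp.single_apply, Fin.reduceEq, if_true, if_false, zero_add,
    Function.iterate_zero_apply, smul_smul]
  rw [one_div, mul_inv, ← inv_pow, hsign, mul_pow]
  congr 1
  rw [smul_eq_mul]
  ring

theorem CopCheck_iterate_Del_eq_pairingMap (a p q : ℕ) :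
    CopCheck n a ((Del n)^[p] f) ((Del n)^[q] g) =
      pairingMap n f g ((a ! : ℂ)⁻¹ • (X 0 ^ p * X 1 ^ q * X 2 ^ a)) := by
  rw [X_pow_eq_monomial, X_pow_eq_monomial, X_pow_eq_monomial, monomial_mul, monomial_mul,
    smul_monomial, pairingMap_monomial, CopCheck_eq_smul_pairing, pairingTerm]
  simp only [Finsupp.add_apply, Finsupp.single_apply, Fin.reduceEq, if_true, if_false, zero_add,
    add_zero, smul_smul]
  congr 1
  rw [smul_eq_mul, div_pow]
  ring

theorem sum_iterate_Del_Cop (hf : ContDiff ℝ ∞ f) (hg : ContDiff ℝ ∞ g) (N : ℕ) :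
    ∑ ab ∈ antidiagonal N, (1 / (ab.1 ! : ℂ)) • (Del n)^[ab.1] (Cop n ab.2 f g) =
      pairingMap n f g ((N ! : ℂ)⁻¹ • (X 0 + X 1 + X 2) ^ N) := by
  rw [show (X 0 + X 1 + X 2 : MvPolynomial (Fin 4) ℂ) = (X 0 + X 1 + X 2 + X 3) + -X 3 by ring,
    inv_factorial_smul_add_pow, map_sum]
  refine sum_congr rfl fun ab _ => ?_
  rw [Cop_eq_pairingMap, iterate_Del_pairingMap hf hg, mul_smul_comm, map_smul, map_smul, smul_smul,
    one_div]

theorem sum_CopCheck_iterate_Del (N : ℕ) :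
    ∑ abc ∈ antidiagonal N, ∑ bc ∈ antidiagonal abc.2, (1 / ((bc.1 ! : ℂ) * (bc.2 ! : ℂ))) •
        CopCheck n abc.1 ((Del n)^[bc.1] f) ((Del n)^[bc.2] g) =
      pairingMap n f g ((N ! : ℂ)⁻¹ • (X 0 + X 1 + X 2) ^ N) := by
  rw [show (X 0 + X 1 + X 2 : MvPolynomial (Fin 4) ℂ) = X 2 + (X 0 + X 1) by ring,
    inv_factorial_smul_add_pow, map_sum]
  refine sum_congr rfl fun am _ => ?_
  rw [← smul_smul, ← mul_smul_comm, inv_factorial_smul_add_pow, mul_sum, smul_sum, map_sum]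
  refine sum_congr rfl fun bc _ => ?_
  rw [CopCheck_iterate_Del_eq_pairingMap, mul_smul_comm, smul_smul, map_smul, map_smul, smul_smul]
  congr 1
  · ring
  · rw [mul_comm]

end PairingMap

theorem statement14_general (n : ℕ) (f g : (Fin n → ℝ) × (Fin n → ℝ) → ℂ)
    (hf : ContDiff ℝ (⊤ : ℕ∞) f) (hg : ContDiff ℝ (⊤ : ℕ∞) g) :
    ∀ (N : ℕ) (p : (Fin n → ℝ) × (Fin n → ℝ)),
      (∑ ab ∈ Finset.HasAntidiagonal.antidiagonal N,
          (1 / (Nat.factorial ab.1 : ℂ)) * (Del n)^[ab.1] (Cop n ab.2 f g) p) =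
        (∑ abc ∈ Finset.HasAntidiagonal.antidiagonal N, ∑ bc ∈ Finset.HasAntidiagonal.antidiagonal abc.2,
          (1 / ((Nat.factorial bc.1 : ℂ) * (Nat.factorial bc.2 : ℂ))) *
            CopCheck n abc.1 ((Del n)^[bc.1] f) ((Del n)^[bc.2] g) p) := by
  intro N p
  have hlhs := congrFun (sum_iterate_Del_Cop hf hg N) p
  have hrhs := congrFun (sum_CopCheck_iterate_Del (f := f) (g := g) N) p
  simp only [Finset.sum_apply, Pi.smul_apply, smul_eq_mul] at hlhs hrhs
  rw [hlhs, hrhs]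

/-- The formal operator `e^{ℏΔ}` intertwines `⋆` and `⋆̌` order by order in `ℏ`:
for smooth `ℤ^{2n}`-periodic `f, g` and every `N ≥ 0`,
`Σ_{a+b=N} (1/a!) Δ^a(C_b(f,g)) = Σ_{a+b+c=N} (1/(b!·c!)) Č_a(Δ^b f, Δ^c g)`. -/
theorem statement14 (n : ℕ) (hn : 1 ≤ n) (f g : (Fin n → ℝ) × (Fin n → ℝ) → ℂ)
    (hf : ContDiff ℝ (⊤ : ℕ∞) f) (hg : ContDiff ℝ (⊤ : ℕ∞) g)
    (hperf : IsPeriodic2 n f) (hperg : IsPeriodic2 n g) :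
    ∀ (N : ℕ) (p : (Fin n → ℝ) × (Fin n → ℝ)),
      (∑ ab ∈ Finset.HasAntidiagonal.antidiagonal N,
          (1 / (Nat.factorial ab.1 : ℂ)) * (Del n)^[ab.1] (Cop n ab.2 f g) p) =
        (∑ abc ∈ Finset.HasAntidiagonal.antidiagonal N, ∑ bc ∈ Finset.HasAntidiagonal.antidiagonal abc.2,
          (1 / ((Nat.factorial bc.1 : ℂ) * (Nat.factorial bc.2 : ℂ))) *
            CopCheck n abc.1 ((Del n)^[bc.1] f) ((Del n)^[bc.2] g) p) :=
  statement14_general n f g hf hg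
end
end
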